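/- Under the same inverse iteration scheme with u_0 ∈ closure(Dom(Φ)) \ {0}, the ratios of successive norms are nonincreasing: ‖u_k‖/‖u_{k+1}‖ ≤ ‖u_{k−1}‖/‖u_k‖ for each k ∈ ℕ. -/

import Mathlib

open Filter Set MeasureTheory Topology
open scoped ENNReal NNReal

noncomputable section

variable {X : Type*} [NormedAddCommGroup X] [NormedSpace ℝ X] [CompleteSpace X]

/-- Subdifferential of an `EReal`-valued functional `Φ` at `u`. -/
def ERealSubdiff (Φ : X → EReal) (u : X) : Set (X →L[ℝ] ℝ) :=
  {ξ | ∀ w : X, Φ u + ((ξ (w - u) : ℝ) : EReal) ≤ Φ w}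

/-- The duality map `J_p`: the subdifferential of `‖·‖^p / p` at `u`. -/
def Jdual (p : ℝ) (u : X) : Set (X →L[ℝ] ℝ) :=
  {ξ | ∀ w : X, ‖u‖ ^ p / p + ξ (w - u) ≤ ‖w‖ ^ p / p}

/-- Convexity for an `EReal`-valued functional. -/
def IsConvexE (Φ : X → EReal) : Prop :=
  ∀ u v : X, ∀ a b : ℝ, 0 ≤ a → 0 ≤ b → a + b = 1 →
    Φ (a • u + b • v) ≤ (a : EReal) * Φ u + (b : EReal) * Φ v

/-- Strict convexity on the domain `{Φ < ∞}`. -/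
def IsStrictConvexOnDom (Φ : X → EReal) : Prop :=
  ∀ u v : X, Φ u ≠ ⊤ → Φ v ≠ ⊤ → u ≠ v → ∀ a b : ℝ, 0 < a → 0 < b → a + b = 1 →
    Φ (a • u + b • v) < (a : EReal) * Φ u + (b : EReal) * Φ v

/-- Positive homogeneity of degree `p`. -/
def IsHomog (Φ : X → EReal) (p : ℝ) : Prop :=
  ∀ t : ℝ, 0 ≤ t → ∀ u : X, Φ (t • u) = ((t ^ p : ℝ) : EReal) * Φ u

/-- The set of Rayleigh quotients `p Φ(u)/‖u‖^p` over nonzero `u` in the domain. -/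
def RayleighSet (Φ : X → EReal) (p : ℝ) : Set ℝ :=
  {r | ∃ u : X, u ≠ 0 ∧ Φ u ≠ ⊤ ∧ r = p * (Φ u).toReal / ‖u‖ ^ p}

/-- Simplicity of the least Rayleigh quotient `lam`. -/
def IsSimple (Φ : X → EReal) (p lam : ℝ) : Prop :=
  ∀ u v : X, u ≠ 0 → v ≠ 0 → Φ u ≠ ⊤ → Φ v ≠ ⊤ →
    lam = p * (Φ u).toReal / ‖u‖ ^ p → lam = p * (Φ v).toReal / ‖v‖ ^ p →
    ∃ c : ℝ, v = c • u

/-- `P_w(u)`: best approximations of `u` from the ray `{β w : β ≥ 0}`. -/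
def ProjRay (w u : X) : Set X :=
  {x | ∃ α : ℝ, 0 ≤ α ∧ x = α • w ∧ ∀ β : ℝ, 0 ≤ β → ‖u - α • w‖ ≤ ‖u - β • w‖}

/-- `α_w(u) := inf {α > 0 : α w ∈ P_w(u)}`. -/
def alphaRay (w u : X) : ℝ :=
  sInf {α : ℝ | 0 < α ∧ α • w ∈ ProjRay w u}

/-- Local absolute continuity of a path on `[0, ∞)`. -/
def LocAC {E : Type*} [NormedAddCommGroup E] (v : ℝ → E) : Prop :=
  ∀ T : ℝ, 0 < T → ∃ h : ℝ → ℝ, IntegrableOn h (Icc 0 T) ∧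
    ∀ s t : ℝ, 0 ≤ s → s ≤ t → t ≤ T → ‖v t - v s‖ ≤ ∫ τ in Icc s t, h τ

/-- `m` is the metric derivative of `v` (a.e. on `(0,∞)`). -/
def HasMetricDeriv {E : Type*} [NormedAddCommGroup E] (v : ℝ → E) (m : ℝ → ℝ) : Prop :=
  ∀ᵐ t ∂(volume.restrict (Ioi (0:ℝ))),
    Tendsto (fun h : ℝ => ‖v (t + h) - v t‖ / |h|) (𝓝[≠] 0) (𝓝 (m t))

/-- Local slope `|∂Φ|(u) = limsup_{z → 0} (Φ(u) − Φ(u+z))⁺ / ‖z‖`, valued in `[0,∞]`. -/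
def localSlope (Φ : X → EReal) (u : X) : ℝ≥0∞ :=
  Filter.limsup (fun z : X => ENNReal.ofReal ((Φ u - Φ (u + z)).toReal / ‖z‖)) (𝓝[≠] (0 : X))

/-- `v` is a `p`-curve of maximal slope for `Φ`, with metric derivative `m` and with
`φ` a real-valued a.e.-differentiable representative of `Φ ∘ v`; the defining inequality
`(Φ ∘ v)' ≤ -m^p/p - |∂Φ|(v)^q/q` holds a.e. on `(0,∞)`. -/
def IsPCurve (Φ : X → EReal) (p q : ℝ) (v : ℝ → X) (m : ℝ → ℝ) (φ : ℝ → ℝ) : Prop :=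
  LocAC v ∧ HasMetricDeriv v m ∧ (∀ t : ℝ, 0 ≤ t → (φ t : EReal) = Φ (v t)) ∧
  ∀ᵐ t ∂(volume.restrict (Ioi (0:ℝ))),
    ∃ d : ℝ, HasDerivAt φ d t ∧ d ≤ 0 ∧
      ENNReal.ofReal (m t ^ p / p) + localSlope Φ (v t) ^ q / ENNReal.ofReal q ≤
        ENNReal.ofReal (-d)

/-!
Subgradients of a `p`-homogeneous functional satisfy Euler's identity `ξ u = p Φ(u)`; since
`J_p(u)` is the subdifferential of the `p`-homogeneous functional `‖·‖^p / p`, this also gives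
`ξ u = ‖u‖^p` and `‖ξ‖ ≤ ‖u‖^(p-1)` on `J_p(u)`. Testing the subgradient inequality for
`ξ ∈ ∂Φ(u_{k+2}) ∩ J_p(u_{k+1})` at `t u_{k+1}` with `t = ‖u_{k+1}‖ / ‖u_k‖` then yields
`‖u_{k+1}‖^(p+1) ≤ p Φ(u_{k+2}) ‖u_k‖ ≤ ‖u_{k+1}‖^(p-1) ‖u_{k+2}‖ ‖u_k‖`,
that is `‖u_{k+1}‖² ≤ ‖u_k‖ ‖u_{k+2}‖`.
-/

theorem eq_mul_of_forall_sub_one_mul_le {p a c : ℝ}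
    (h : ∀ t : ℝ, 0 ≤ t → (t - 1) * c ≤ (t ^ p - 1) * a) : c = p * a := by
  set g : ℝ → ℝ := fun t => (t ^ p - 1) * a - (t - 1) * c
  have hmin : IsLocalMin g 1 := by
    filter_upwards [eventually_gt_nhds zero_lt_one] with t ht
    simp only [g, Real.one_rpow, sub_self, zero_mul]
    linarith [h t ht.le]
  have hderiv : HasDerivAt g (p * 1 ^ (p - 1) * a - 1 * c) 1 :=
    (((Real.hasDerivAt_rpow_const (Or.inl one_ne_zero)).sub_const 1).mul_const a).sub
      (((hasDerivAt_id 1).sub_const 1).mul_const c)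
  have := hmin.hasDerivAt_eq_zero hderiv
  simp only [Real.one_rpow, mul_one, one_mul] at this
  linarith

theorem le_rpow_sub_one_mul_of_forall_mul_le {p c d e : ℝ} (hp : 1 < p) (hd : 0 ≤ d)
    (he : 0 ≤ e) (h : ∀ t : ℝ, 0 ≤ t → t * c ≤ t ^ p * (d ^ p / p) + (p - 1) * (e ^ p / p)) :
    c ≤ e ^ (p - 1) * d := by
  have hp0 : 0 < p := zero_lt_one.trans hp
  rcases he.eq_or_lt with rfl | he
  · rw [Real.zero_rpow (by linarith), zero_mul]
    have hsmall : ∀ t : ℝ, 0 < t → c ≤ t ^ (p - 1) * (d ^ p / p) := fun t ht => by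
      rw [Real.rpow_sub_one ht.ne', div_mul_eq_mul_div, le_div_iff₀ ht, mul_comm c]
      simpa [Real.zero_rpow hp0.ne'] using h t ht.le
    have hlim : Tendsto (fun t : ℝ => t ^ (p - 1) * (d ^ p / p)) (𝓝[>] 0) (𝓝 0) := by
      have := ((Real.continuousAt_rpow_const 0 (p - 1) (Or.inr (by linarith))).tendsto.mono_left
        (nhdsWithin_le_nhds (s := Ioi 0))).mul_const (d ^ p / p)
      rwa [Real.zero_rpow (by linarith), zero_mul] at this
    exact ge_of_tendsto hlim (eventually_nhdsWithin_of_forall hsmall)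
  rcases hd.eq_or_lt with rfl | hd
  · rw [mul_zero]
    by_contra! hc
    set K := (p - 1) * (e ^ p / p)
    have := h ((|K| + 1) / c) (by positivity)
    rw [div_mul_cancel₀ _ hc.ne', Real.zero_rpow hp0.ne', zero_div, mul_zero, zero_add] at this
    linarith [le_abs_self K]
  · have key := h (e / d) (div_pos he hd).le
    have hyoung : (e / d) ^ p * (d ^ p / p) + (p - 1) * (e ^ p / p) = e ^ p := by
      rw [Real.div_rpow he.le hd.le]
      field_simp [(Real.rpow_pos_of_pos hd p).ne']
      ring
    rw [hyoung] at key
    rw [Real.rpow_sub_one he.ne', div_mul_eq_mul_div, le_div_iff₀ he]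
    calc c * e = e / d * c * d := by field_simp
      _ ≤ e ^ p * d := mul_le_mul_of_nonneg_right key hd.le

theorem sq_le_mul_of_forall_mul_rpow_le {p a b A B C : ℝ} (hp : 1 < p) (hA : 0 ≤ A)
    (hB : 0 ≤ B) (hC : 0 ≤ C) (h₁ : p * a ≤ A ^ (p - 1) * B) (h₂ : p * b ≤ B ^ (p - 1) * C)
    (h₃ : ∀ t : ℝ, 0 ≤ t → t * B ^ p ≤ t ^ p * a + (p - 1) * b) :
    B ^ 2 ≤ A * C := by
  rcases hB.eq_or_lt with rfl | hB
  · simpa using mul_nonneg hA hC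
  have hBp : 0 < B ^ p := Real.rpow_pos_of_pos hB p
  have key : B ^ p * B ≤ A * (p * b) := by
    rcases hA.eq_or_lt with rfl | hA
    · -- `h₃` would bound `t * B ^ p` uniformly in `t`
      exfalso
      rw [Real.zero_rpow (by linarith), zero_mul] at h₁
      have ha : a ≤ 0 := nonpos_of_mul_nonpos_right h₁ (by linarith)
      set t := ((p - 1) * |b| + 1) / B ^ p
      have := h₃ t (by positivity)
      rw [div_mul_cancel₀ _ hBp.ne'] at this
      have hta : t ^ p * a ≤ 0 :=
        mul_nonpos_of_nonneg_of_nonpos (Real.rpow_nonneg (by positivity) p) ha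
      nlinarith [le_abs_self b]
    · have h₃' := h₃ (B / A) (div_pos hB hA).le
      rw [Real.div_rpow hB.le hA.le] at h₃'
      rw [Real.rpow_sub_one hA.ne', div_mul_eq_mul_div] at h₁
      have hterm : p * (B ^ p / A ^ p * a) ≤ B / A * B ^ p :=
        calc p * (B ^ p / A ^ p * a) = B ^ p / A ^ p * (p * a) := by ring
          _ ≤ B ^ p / A ^ p * (A ^ p * B / A) := by gcongr
          _ = B / A * B ^ p := by field_simp
      have hs : (p - 1) * (B / A * B ^ p) ≤ (p - 1) * (p * b) := by
        nlinarith [mul_le_mul_of_nonneg_left h₃' (by linarith : 0 ≤ p)]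
      calc B ^ p * B = A * (B / A * B ^ p) := by field_simp
        _ ≤ A * (p * b) := mul_le_mul_of_nonneg_left (le_of_mul_le_mul_left hs (by linarith)) hA.le
  have hBp' : B ^ p = B ^ (p - 1) * B := by
    rw [Real.rpow_sub_one hB.ne', div_mul_cancel₀ _ hB.ne']
  have : B ^ (p - 1) * B ^ 2 ≤ B ^ (p - 1) * (A * C) := by
    nlinarith [mul_le_mul_of_nonneg_left h₂ hA]
  exact le_of_mul_le_mul_left this (Real.rpow_pos_of_pos hB _)

section

variable {E : Type*} [NormedAddCommGroup E] [NormedSpace ℝ E]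

theorem IsHomog.apply_zero {Φ : E → EReal} {p : ℝ} (hΦ : IsHomog Φ p) (hp : p ≠ 0) :
    Φ 0 = 0 := by
  simpa [Real.zero_rpow hp] using hΦ 0 le_rfl 0

theorem isHomog_norm_rpow_div (p : ℝ) :
    IsHomog (fun x : E => ((‖x‖ ^ p / p : ℝ) : EReal)) p := fun t ht x => by
  dsimp only
  rw [← EReal.coe_mul, norm_smul, Real.norm_of_nonneg ht, Real.mul_rpow ht (norm_nonneg x),
    mul_div_assoc]

theorem mem_Jdual_iff {p : ℝ} {u : E} {ξ : E →L[ℝ] ℝ} :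
    ξ ∈ Jdual p u ↔ ξ ∈ ERealSubdiff (fun x : E => ((‖x‖ ^ p / p : ℝ) : EReal)) u := by
  simp only [Jdual, ERealSubdiff, Set.mem_ofPred_eq, ← EReal.coe_add, EReal.coe_le_coe_iff]

theorem ne_top_of_mem_ERealSubdiff {Φ : E → EReal} {u w : E} {ξ : E →L[ℝ] ℝ}
    (hξ : ξ ∈ ERealSubdiff Φ u) (hw : Φ w ≠ ⊤) : Φ u ≠ ⊤ := fun hu => by
  have h := hξ w
  rw [hu, EReal.top_add_coe, top_le_iff] at h
  exact hw h

theorem apply_self_of_mem_ERealSubdiff {Φ : E → EReal} {p a : ℝ} (hΦ : IsHomog Φ p)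
    {u : E} {ξ : E →L[ℝ] ℝ} (hξ : ξ ∈ ERealSubdiff Φ u) (hu : Φ u = a) : ξ u = p * a := by
  refine eq_mul_of_forall_sub_one_mul_le fun t ht => ?_
  have h := hξ (t • u)
  rw [hΦ t ht, hu, ← EReal.coe_mul, ← EReal.coe_add, EReal.coe_le_coe_iff, map_sub, map_smul,
    smul_eq_mul] at h
  linarith

theorem apply_le_of_mem_ERealSubdiff {Φ : E → EReal} {p a b : ℝ} (hΦ : IsHomog Φ p)
    {u w : E} {ξ : E →L[ℝ] ℝ} (hξ : ξ ∈ ERealSubdiff Φ u) (hu : Φ u = a) (hw : Φ w = b) :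
    ξ w ≤ b + (p - 1) * a := by
  have h := hξ w
  rw [hu, hw, ← EReal.coe_add, EReal.coe_le_coe_iff, map_sub,
    apply_self_of_mem_ERealSubdiff hΦ hξ hu] at h
  linarith

theorem apply_self_of_mem_Jdual {p : ℝ} (hp : p ≠ 0) {u : E} {ξ : E →L[ℝ] ℝ}
    (hξ : ξ ∈ Jdual p u) : ξ u = ‖u‖ ^ p := by
  rw [apply_self_of_mem_ERealSubdiff (isHomog_norm_rpow_div p) (mem_Jdual_iff.1 hξ) rfl]
  field_simp

theorem apply_le_of_mem_Jdual {p : ℝ} (hp : 1 < p) {u : E} {ξ : E →L[ℝ] ℝ}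
    (hξ : ξ ∈ Jdual p u) (w : E) : ξ w ≤ ‖u‖ ^ (p - 1) * ‖w‖ := by
  refine le_rpow_sub_one_mul_of_forall_mul_le hp (norm_nonneg w) (norm_nonneg u) fun t ht => ?_
  have h := apply_le_of_mem_ERealSubdiff (isHomog_norm_rpow_div p) (mem_Jdual_iff.1 hξ) rfl
    (w := t • w) rfl
  rwa [map_smul, smul_eq_mul, norm_smul, Real.norm_of_nonneg ht,
    Real.mul_rpow ht (norm_nonneg w), mul_div_assoc] at h

theorem norm_sq_le_mul_of_mem_ERealSubdiff_inter_Jdual {Φ : E → EReal} {p : ℝ} (hp : 1 < p)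
    (hΦ : ∀ x, Φ x ≠ ⊥) (hhom : IsHomog Φ p) {x y z : E} {ξ η : E →L[ℝ] ℝ}
    (hξ : ξ ∈ ERealSubdiff Φ y) (hξJ : ξ ∈ Jdual p x)
    (hη : η ∈ ERealSubdiff Φ z) (hηJ : η ∈ Jdual p y) :
    ‖y‖ ^ 2 ≤ ‖x‖ * ‖z‖ := by
  have h0 : Φ 0 ≠ ⊤ := by simp [hhom.apply_zero (by linarith)]
  obtain ⟨a, ha⟩ : ∃ a : ℝ, Φ y = a :=
    ⟨_, (EReal.coe_toReal (ne_top_of_mem_ERealSubdiff hξ h0) (hΦ y)).symm⟩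
  obtain ⟨b, hb⟩ : ∃ b : ℝ, Φ z = b :=
    ⟨_, (EReal.coe_toReal (ne_top_of_mem_ERealSubdiff hη h0) (hΦ z)).symm⟩
  have h₁ : p * a ≤ ‖x‖ ^ (p - 1) * ‖y‖ :=
    apply_self_of_mem_ERealSubdiff hhom hξ ha ▸ apply_le_of_mem_Jdual hp hξJ y
  have h₂ : p * b ≤ ‖y‖ ^ (p - 1) * ‖z‖ :=
    apply_self_of_mem_ERealSubdiff hhom hη hb ▸ apply_le_of_mem_Jdual hp hηJ z
  have h₃ (t : ℝ) (ht : 0 ≤ t) : t * ‖y‖ ^ p ≤ t ^ p * a + (p - 1) * b := by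
    have hty : Φ (t • y) = ((t ^ p * a : ℝ) : EReal) := by rw [hhom t ht, ha, EReal.coe_mul]
    have h := apply_le_of_mem_ERealSubdiff hhom hη hb hty
    rwa [map_smul, smul_eq_mul, apply_self_of_mem_Jdual (by linarith) hηJ] at h
  exact sq_le_mul_of_forall_mul_rpow_le hp (norm_nonneg x) (norm_nonneg y) (norm_nonneg z)
    h₁ h₂ h₃

end

theorem inverse_iteration_norm_ratio_monotone_general (Φ : X → EReal) (p : ℝ) (hp : 1 < p)
    (hnn : ∀ x : X, (0 : EReal) ≤ Φ x)
    (hhom : IsHomog Φ p)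
    (u : ℕ → X)
    (hit : ∀ k : ℕ, ∃ ξ : X →L[ℝ] ℝ, ξ ∈ ERealSubdiff Φ (u (k + 1)) ∧ ξ ∈ Jdual p (u k)) :
    ∀ k : ℕ, ‖u (k + 1)‖ / ‖u (k + 2)‖ ≤ ‖u k‖ / ‖u (k + 1)‖ := by
  intro k
  obtain ⟨ξ, hξ, hξJ⟩ := hit k
  obtain ⟨η, hη, hηJ⟩ := hit (k + 1)
  have hsq := norm_sq_le_mul_of_mem_ERealSubdiff_inter_Jdual hp
    (fun x => (EReal.bot_lt_zero.trans_le (hnn x)).ne') hhom hξ hξJ hη hηJ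
  rcases (norm_nonneg (u (k + 1))).eq_or_lt with h₁ | h₁
  · rw [← h₁, zero_div]
    positivity
  rcases (norm_nonneg (u (k + 2))).eq_or_lt with h₂ | h₂
  · rw [← h₂, div_zero]
    positivity
  rwa [div_le_div_iff₀ h₂ h₁, ← sq]

theorem inverse_iteration_norm_ratio_monotone (Φ : X → EReal) (p : ℝ) (hp : 1 < p)
    (hnn : ∀ x : X, (0 : EReal) ≤ Φ x)
    (hconv : IsConvexE Φ) (hsc : IsStrictConvexOnDom Φ)
    (hlsc : LowerSemicontinuous Φ) (hhom : IsHomog Φ p)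
    (hcs : ∀ c : ℝ, IsCompact {x : X | Φ x ≤ (c : EReal)})
    (u : ℕ → X) (hu0 : u 0 ∈ closure {x : X | Φ x ≠ ⊤}) (hu0' : u 0 ≠ 0)
    (hit : ∀ k : ℕ, ∃ ξ : X →L[ℝ] ℝ, ξ ∈ ERealSubdiff Φ (u (k + 1)) ∧ ξ ∈ Jdual p (u k)) :
    ∀ k : ℕ, ‖u (k + 1)‖ / ‖u (k + 2)‖ ≤ ‖u k‖ / ‖u (k + 1)‖ :=
  inverse_iteration_norm_ratio_monotone_general Φ p hp hnn hhom u hit
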